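/- arXiv:1407.7599 — 2 statements merged into one kernel-verified Lean document; each statement's English description precedes it below -/
import Mathlib

section
/- Let (X,d) be a compact metric space with a distinguished base point x₀ ∈ X and let α ∈ (0,1). Then for every function f : X → ℝ with f(x₀) = 0 and |f(x) − f(y)| ≤ d(x,y)^α for all x,y ∈ X, there exists a sequence of functions fₙ : X → ℝ such that for every n: fₙ(x₀) = 0, |fₙ(x) − fₙ(y)| ≤ d(x,y)^α for all x,y ∈ X, fₙ is little α-Hölder, and such that fₙ(x) → f(x) as n → ∞ for every x ∈ X. -/
/-!
Approximate `f` from below by its inf-convolutions `gₙ x = ⨅ z, f z + ωₙ (dist x z)` with the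
moduli `ωₙ t = min (rₙ ^ (α - 1) * t) (t ^ α)`, `rₙ → 0`. Each `ωₙ` is concave on `[0, ∞)` and
vanishes at `0`, hence subadditive, so `gₙ` inherits `ωₙ` as a modulus of continuity: it is
`α`-Hölder with constant `1` and Lipschitz, hence little `α`-Hölder because `α < 1`. Since
`t ^ α ≤ ωₙ t + rₙ ^ α`, the Hölder bound on `f` gives `f - rₙ ^ α ≤ gₙ ≤ f`. Finally subtract
`gₙ x₀` to vanish at the base point.
-/

open Filter Set Topology

lemma ConcaveOn.mul_le_map_mul {f : ℝ → ℝ} (hf : ConcaveOn ℝ (Ici 0) f) (h₀ : 0 ≤ f 0)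
    {b u : ℝ} (hb₀ : 0 ≤ b) (hb₁ : b ≤ 1) (hu : 0 ≤ u) : b * f u ≤ f (b * u) := by
  have h := hf.2 (mem_Ici.2 le_rfl) (mem_Ici.2 hu) (sub_nonneg.2 hb₁) hb₀ (sub_add_cancel 1 b)
  simp only [smul_eq_mul, mul_zero, zero_add] at h
  nlinarith

lemma ConcaveOn.map_add_le {f : ℝ → ℝ} (hf : ConcaveOn ℝ (Ici 0) f) (h₀ : 0 ≤ f 0)
    {s t : ℝ} (hs : 0 ≤ s) (ht : 0 ≤ t) : f (s + t) ≤ f s + f t := by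
  rcases (add_nonneg hs ht).eq_or_lt with hst | hst
  · obtain ⟨rfl, rfl⟩ : s = 0 ∧ t = 0 := ⟨by linarith, by linarith⟩
    simpa using h₀
  have hs' := hf.mul_le_map_mul h₀ (div_nonneg hs hst.le)
    (div_le_one_of_le₀ (le_add_of_nonneg_right ht) hst.le) hst.le
  have ht' := hf.mul_le_map_mul h₀ (div_nonneg ht hst.le)
    (div_le_one_of_le₀ (le_add_of_nonneg_left hs) hst.le) hst.le
  rw [div_mul_cancel₀ _ hst.ne'] at hs' ht'
  calc f (s + t) = s / (s + t) * f (s + t) + t / (s + t) * f (s + t) := by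
        rw [← add_mul, ← add_div, div_self hst.ne', one_mul]
    _ ≤ f s + f t := add_le_add hs' ht'

section Modulus

variable {K α : ℝ}

lemma concaveOn_min_mul_rpow (hK : 0 ≤ K) (hα₀ : 0 ≤ α) (hα₁ : α ≤ 1) :
    ConcaveOn ℝ (Ici 0) fun t : ℝ => min (K * t) (t ^ α) :=
  (((concaveOn_id (convex_Ici 0)).smul hK).inf (Real.concaveOn_rpow hα₀ hα₁)).congr
    fun _ _ => rfl

lemma monotoneOn_min_mul_rpow (hK : 0 ≤ K) (hα₀ : 0 ≤ α) :
    MonotoneOn (fun t : ℝ => min (K * t) (t ^ α)) (Ici 0) :=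
  fun _ hs _ _ hst => min_le_min (mul_le_mul_of_nonneg_left hst hK)
    (Real.rpow_le_rpow hs hst hα₀)

lemma min_mul_rpow_add_le (hK : 0 ≤ K) (hα₀ : 0 < α) (hα₁ : α ≤ 1) {s t : ℝ}
    (hs : 0 ≤ s) (ht : 0 ≤ t) :
    min (K * (s + t)) ((s + t) ^ α) ≤ min (K * s) (s ^ α) + min (K * t) (t ^ α) :=
  (concaveOn_min_mul_rpow hK hα₀.le hα₁).map_add_le
    (by simp [Real.zero_rpow hα₀.ne']) hs ht

/-- The linear branch is the smaller one only below the threshold `r`. -/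
lemma rpow_le_min_mul_rpow_add {r t : ℝ} (hr : 0 < r) (hα₀ : 0 ≤ α) (hα₁ : α < 1)
    (ht : 0 ≤ t) : t ^ α ≤ min (r ^ (α - 1) * t) (t ^ α) + r ^ α := by
  rcases le_total (t ^ α) (r ^ (α - 1) * t) with h | h
  · rw [min_eq_right h]
    linarith [Real.rpow_nonneg hr.le α]
  rw [min_eq_left h]
  have htr : t ≤ r := by
    rcases ht.eq_or_lt with rfl | ht
    · exact hr.le
    have hrt : r ^ (α - 1) ≤ t ^ (α - 1) := by
      rwa [Real.rpow_sub_one ht.ne', le_div_iff₀ ht]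
    exact (Real.rpow_le_rpow_iff_of_neg hr ht (by linarith)).1 hrt
  linarith [Real.rpow_le_rpow ht htr hα₀, mul_nonneg (Real.rpow_nonneg hr.le (α - 1)) ht]

end Modulus

section InfConvolution

variable {X : Type*} [PseudoMetricSpace X] {f : X → ℝ} {ω : ℝ → ℝ} {c : ℝ}

noncomputable def infConvolution (f : X → ℝ) (ω : ℝ → ℝ) (x : X) : ℝ :=
  ⨅ z, f z + ω (dist x z)

variable (hc : ∀ x z, f x ≤ f z + ω (dist x z) + c)
include hc

lemma bddBelow_range_add_modulus (x : X) : BddBelow (range fun z => f z + ω (dist x z)) :=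
  ⟨f x - c, forall_mem_range.2 fun z => by linarith [hc x z]⟩

lemma infConvolution_le (hω : ω 0 = 0) (x : X) : infConvolution f ω x ≤ f x :=
  (ciInf_le (bddBelow_range_add_modulus hc x) x).trans_eq (by simp [hω])

lemma sub_le_infConvolution (x : X) : f x - c ≤ infConvolution f ω x :=
  have : Nonempty X := ⟨x⟩
  le_ciInf fun z => by linarith [hc x z]

lemma abs_infConvolution_sub_le (hω : ω 0 = 0) (x : X) : |infConvolution f ω x - f x| ≤ c :=
  abs_le.2 ⟨by linarith [sub_le_infConvolution hc x], by
    linarith [infConvolution_le hc hω x, sub_le_infConvolution hc x]⟩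

lemma infConvolution_le_add (hmono : MonotoneOn ω (Ici 0))
    (hsub : ∀ s t, 0 ≤ s → 0 ≤ t → ω (s + t) ≤ ω s + ω t) (x y : X) :
    infConvolution f ω x ≤ infConvolution f ω y + ω (dist x y) := by
  have : Nonempty X := ⟨x⟩
  rw [← sub_le_iff_le_add]
  refine le_ciInf fun z => sub_le_iff_le_add.2 ?_
  calc infConvolution f ω x ≤ f z + ω (dist x z) := ciInf_le (bddBelow_range_add_modulus hc x) z
    _ ≤ f z + ω (dist y z + dist x y) := by
        gcongr
        exact hmono dist_nonneg (add_nonneg dist_nonneg dist_nonneg)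
          (by linarith [dist_triangle x y z])
    _ ≤ f z + ω (dist y z) + ω (dist x y) := by
        linarith [hsub _ _ (dist_nonneg (x := y) (y := z)) (dist_nonneg (x := x) (y := y))]

lemma abs_infConvolution_sub_infConvolution_le (hmono : MonotoneOn ω (Ici 0))
    (hsub : ∀ s t, 0 ≤ s → 0 ≤ t → ω (s + t) ≤ ω s + ω t) (x y : X) :
    |infConvolution f ω x - infConvolution f ω y| ≤ ω (dist x y) := by
  have hxy := infConvolution_le_add hc hmono hsub x y
  have hyx := infConvolution_le_add hc hmono hsub y x
  rw [dist_comm] at hyx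
  exact abs_sub_le_iff.2 ⟨by linarith, by linarith⟩

end InfConvolution

def IsLittleHolder {X : Type*} [PseudoMetricSpace X] (α : ℝ) (g : X → ℝ) : Prop :=
  ∀ ε > (0 : ℝ), ∃ δ > (0 : ℝ), ∀ x y : X,
    0 < dist x y → dist x y < δ → |g x - g y| ≤ ε * dist x y ^ α

lemma IsLittleHolder.of_abs_sub_le_mul_dist {X : Type*} [PseudoMetricSpace X] {g : X → ℝ}
    {α K : ℝ} (hα : α < 1) (hK : 0 < K) (hg : ∀ x y, |g x - g y| ≤ K * dist x y) :
    IsLittleHolder α g := by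
  intro ε hε
  refine ⟨(ε / K) ^ (1 - α)⁻¹, by positivity, fun x y hxy hδ => ?_⟩
  have hsmall : dist x y ^ (1 - α) < ε / K := by
    simpa [← Real.rpow_mul (div_pos hε hK).le, inv_mul_cancel₀ (sub_ne_zero.2 hα.ne')] using
      Real.rpow_lt_rpow dist_nonneg hδ (sub_pos.2 hα)
  calc |g x - g y| ≤ K * dist x y := hg x y
    _ = K * dist x y ^ (1 - α) * dist x y ^ α := by
        rw [mul_assoc, ← Real.rpow_add hxy, sub_add_cancel, Real.rpow_one]
    _ ≤ ε * dist x y ^ α := by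
        gcongr
        rw [lt_div_iff₀' hK] at hsmall
        exact hsmall.le

theorem biduality_holder_pointwise_approx_general
    {X : Type*} [MetricSpace X] (x₀ : X)
    (α : ℝ) (hα₀ : 0 < α) (hα₁ : α < 1)
    (f : X → ℝ) (hf₀ : f x₀ = 0)
    (hf : ∀ x y : X, |f x - f y| ≤ dist x y ^ α) :
    ∃ F : ℕ → X → ℝ,
      (∀ n, F n x₀ = 0) ∧
      (∀ n, ∀ x y : X, |F n x - F n y| ≤ dist x y ^ α) ∧
      (∀ n, ∀ ε > (0 : ℝ), ∃ δ > (0 : ℝ), ∀ x y : X,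
        0 < dist x y → dist x y < δ → |F n x - F n y| ≤ ε * dist x y ^ α) ∧
      (∀ x : X, Filter.Tendsto (fun n => F n x) Filter.atTop (nhds (f x))) := by
  set r : ℕ → ℝ := fun n => 1 / ((n : ℝ) + 1)
  have hr (n : ℕ) : 0 < r n := by positivity
  set g : ℕ → X → ℝ := fun n => infConvolution f fun t => min (r n ^ (α - 1) * t) (t ^ α)
  have hK (n : ℕ) : 0 < r n ^ (α - 1) := Real.rpow_pos_of_pos (hr n) _
  have hc (n : ℕ) (x z : X) :
      f x ≤ f z + min (r n ^ (α - 1) * dist x z) (dist x z ^ α) + r n ^ α := by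
    linarith [(le_abs_self _).trans (hf x z),
      rpow_le_min_mul_rpow_add (hr n) hα₀.le hα₁ (dist_nonneg (x := x) (y := z))]
  have hg (n : ℕ) (x y : X) :
      |g n x - g n y| ≤ min (r n ^ (α - 1) * dist x y) (dist x y ^ α) :=
    abs_infConvolution_sub_infConvolution_le (hc n) (monotoneOn_min_mul_rpow (hK n).le hα₀.le)
      (fun _ _ => min_mul_rpow_add_le (hK n).le hα₀ hα₁.le) x y
  have hgf (n : ℕ) (x : X) : |g n x - f x| ≤ r n ^ α :=
    abs_infConvolution_sub_le (hc n) (by simp [Real.zero_rpow hα₀.ne']) x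
  refine ⟨fun n x => g n x - g n x₀, fun n => sub_self _, fun n x y => ?_, fun n => ?_,
    fun x => ?_⟩
  · rw [sub_sub_sub_cancel_right]
    exact (hg n x y).trans (min_le_right _ _)
  · refine IsLittleHolder.of_abs_sub_le_mul_dist hα₁ (hK n) fun x y => ?_
    rw [sub_sub_sub_cancel_right]
    exact (hg n x y).trans (min_le_left _ _)
  · have hc₀ : Tendsto (fun n => r n ^ α) atTop (𝓝 0) := by
      have := tendsto_one_div_add_atTop_nhds_zero_nat.rpow_const (Or.inr hα₀.le) (p := α)
      rwa [Real.zero_rpow hα₀.ne'] at this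
    have hlim (x : X) : Tendsto (fun n => g n x) atTop (𝓝 (f x)) :=
      tendsto_iff_norm_sub_tendsto_zero.2 <|
        squeeze_zero (fun _ => norm_nonneg _) (fun n => hgf n x) hc₀
    simpa [hf₀] using (hlim x).sub (hlim x₀)

/-- For a pointed compact metric space `(X, d)` and `α ∈ (0,1)`, every `f : X → ℝ` with
`f x₀ = 0` that is `α`-Hölder with constant `1` is the pointwise limit of a sequence of
functions vanishing at `x₀`, `α`-Hölder with constant `1`, and little `α`-Hölder. -/
theorem biduality_holder_pointwise_approx
    {X : Type*} [MetricSpace X] [CompactSpace X] (x₀ : X)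
    (α : ℝ) (hα₀ : 0 < α) (hα₁ : α < 1)
    (f : X → ℝ) (hf₀ : f x₀ = 0)
    (hf : ∀ x y : X, |f x - f y| ≤ dist x y ^ α) :
    ∃ F : ℕ → X → ℝ,
      (∀ n, F n x₀ = 0) ∧
      (∀ n, ∀ x y : X, |F n x - F n y| ≤ dist x y ^ α) ∧
      (∀ n, ∀ ε > (0 : ℝ), ∃ δ > (0 : ℝ), ∀ x y : X,
        0 < dist x y → dist x y < δ → |F n x - F n y| ≤ ε * dist x y ^ α) ∧
      (∀ x : X, Filter.Tendsto (fun n => F n x) Filter.atTop (nhds (f x))) :=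
  biduality_holder_pointwise_approx_general x₀ α hα₀ hα₁ f hf₀ hf
end

section
/- Let (X,d) be a compact metric space, let α ∈ (0,1), let ε > 0, let f : X → ℝ satisfy |f(x) − f(y)| ≤ d(x,y)^α for all x,y ∈ X, and let F ⊆ X be a finite nonempty set. Then there exists a function h : X → ℝ such that h is little α-Hölder, |h(x) − h(y)| ≤ (1 + ε)·d(x,y)^α for all x,y ∈ X, and h(x) = f(x) for all x ∈ F. -/
/-- Finite interpolation by little Hölder functions: if `f` is `α`-Hölder with constant `1`
on a compact metric space and `F` is a finite nonempty subset, then for every `ε > 0` there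
is a little `α`-Hölder function `h`, `α`-Hölder with constant `1 + ε`, agreeing with `f`
on `F`. -/
theorem finite_interpolation_little_holder
    {X : Type*} [MetricSpace X] [CompactSpace X]
    (α : ℝ) (hα₀ : 0 < α) (hα₁ : α < 1)
    (ε : ℝ) (hε : 0 < ε)
    (f : X → ℝ) (hf : ∀ x y : X, |f x - f y| ≤ dist x y ^ α)
    (F : Set X) (hFfin : F.Finite) (hFne : F.Nonempty) :
    ∃ h : X → ℝ,
      (∀ ε' > (0 : ℝ), ∃ δ > (0 : ℝ), ∀ x y : X,
        0 < dist x y → dist x y < δ → |h x - h y| ≤ ε' * dist x y ^ α) ∧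
      (∀ x y : X, |h x - h y| ≤ (1 + ε) * dist x y ^ α) ∧
      (∀ x ∈ F, h x = f x) := by
  set β : ℝ := (α + 1) / 2 with hβdef
  have hαβ : α < β := by rw [hβdef]; linarith
  have hβ1 : β < 1 := by rw [hβdef]; linarith
  have hβ0 : 0 < β := lt_trans hα₀ hαβ
  have hβα : 0 < β - α := by linarith
  obtain ⟨C₀, hC₀⟩ :=
    ((hFfin.prod hFfin).image (fun pq : X × X => dist pq.1 pq.2 ^ (α - β))).bddAbove
  set C : ℝ := 1 + max C₀ 0 with hCdef
  have hC1 : 1 ≤ C := by have := le_max_right C₀ 0; rw [hCdef]; linarith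
  have hC0 : 0 < C := by linarith
  have hCbound : ∀ p ∈ F, ∀ q ∈ F, dist p q ^ α ≤ C * dist p q ^ β := by
    intro p hp q hq
    by_cases hd : dist p q = 0
    · simp [hd, Real.zero_rpow hα₀.ne', Real.zero_rpow hβ0.ne']
    · have hd0 : 0 < dist p q := lt_of_le_of_ne dist_nonneg (Ne.symm hd)
      have hmem : dist p q ^ (α - β) ∈
          (fun pq : X × X => dist pq.1 pq.2 ^ (α - β)) '' (F ×ˢ F) :=
        ⟨(p, q), Set.mk_mem_prod hp hq, rfl⟩
      have h1 : dist p q ^ (α - β) ≤ C := by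
        have := hC₀ hmem
        have h2 := le_max_left C₀ 0
        rw [hCdef]; linarith
      calc dist p q ^ α = dist p q ^ (α - β) * dist p q ^ β := by
            rw [← Real.rpow_add hd0, sub_add_cancel]
        _ ≤ C * dist p q ^ β :=
            mul_le_mul_of_nonneg_right h1 (Real.rpow_nonneg dist_nonneg β)
  set φ : ℝ → ℝ := fun t => min (C * t ^ β) ((1 + ε) * t ^ α) with hφdef
  have hφ0 : φ 0 = 0 := by
    simp [hφdef, Real.zero_rpow hβ0.ne', Real.zero_rpow hα₀.ne']
  have hφnonneg : ∀ t, 0 ≤ t → 0 ≤ φ t := fun t ht =>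
    le_min (mul_nonneg hC0.le (Real.rpow_nonneg ht β))
      (mul_nonneg (by linarith) (Real.rpow_nonneg ht α))
  have hφmono : ∀ a b : ℝ, 0 ≤ a → a ≤ b → φ a ≤ φ b := by
    intro a b ha hab
    exact min_le_min
      (mul_le_mul_of_nonneg_left (Real.rpow_le_rpow ha hab hβ0.le) hC0.le)
      (mul_le_mul_of_nonneg_left (Real.rpow_le_rpow ha hab hα₀.le) (by linarith))
  -- slope inequality
  have hkey : ∀ (γ : ℝ), 0 < γ → γ < 1 → ∀ a c : ℝ, 0 < a → a ≤ c →
      a * c ^ γ ≤ c * a ^ γ := by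
    intro γ hγ0 hγ1 a c ha hac
    have hc : 0 < c := lt_of_lt_of_le ha hac
    have h1 : a ^ (1 - γ) ≤ c ^ (1 - γ) := Real.rpow_le_rpow ha.le hac (by linarith)
    calc a * c ^ γ = a ^ (1 - γ) * a ^ γ * c ^ γ := by
          rw [← Real.rpow_add ha, sub_add_cancel, Real.rpow_one]
      _ ≤ c ^ (1 - γ) * a ^ γ * c ^ γ := by
          have := mul_le_mul_of_nonneg_right
            (mul_le_mul_of_nonneg_right h1 (Real.rpow_nonneg ha.le γ))
            (Real.rpow_nonneg hc.le γ)
          exact this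
      _ = c * a ^ γ := by
          rw [mul_right_comm, ← Real.rpow_add hc, sub_add_cancel, Real.rpow_one,
            mul_comm (c : ℝ) (a ^ γ), mul_comm]
  have hslope : ∀ a c : ℝ, 0 < a → a ≤ c → a * φ c ≤ c * φ a := by
    intro a c ha hac
    have hc : 0 < c := lt_of_lt_of_le ha hac
    have hmin : c * φ a = min (c * (C * a ^ β)) (c * ((1 + ε) * a ^ α)) := by
      rw [hφdef]; exact mul_min_of_nonneg _ _ hc.le
    rw [hmin]
    refine le_min ?_ ?_
    · calc a * φ c ≤ a * (C * c ^ β) :=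
          mul_le_mul_of_nonneg_left (min_le_left _ _) ha.le
        _ ≤ c * (C * a ^ β) := by
          have := hkey β hβ0 hβ1 a c ha hac
          nlinarith [hC0]
    · calc a * φ c ≤ a * ((1 + ε) * c ^ α) :=
          mul_le_mul_of_nonneg_left (min_le_right _ _) ha.le
        _ ≤ c * ((1 + ε) * a ^ α) := by
          have := hkey α hα₀ hα₁ a c ha hac
          nlinarith
  have hφsub : ∀ a b : ℝ, 0 ≤ a → 0 ≤ b → φ (a + b) ≤ φ a + φ b := by
    intro a b ha hb
    rcases ha.eq_or_lt with ha0 | ha0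
    · rw [← ha0, zero_add, hφ0, zero_add]
    rcases hb.eq_or_lt with hb0 | hb0
    · rw [← hb0, add_zero, hφ0, add_zero]
    have h1 := hslope a (a + b) ha0 (by linarith)
    have h2 := hslope b (a + b) hb0 (by linarith)
    nlinarith
  -- the finset
  have hs : hFfin.toFinset.Nonempty := hFfin.toFinset_nonempty.mpr hFne
  set h : X → ℝ := fun x => hFfin.toFinset.sup' hs (fun p => f p - φ (dist x p)) with hhdef
  have hmod : ∀ x y : X, h x - h y ≤ φ (dist x y) := by
    intro x y
    have hxy : h x ≤ h y + φ (dist x y) := by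
      apply Finset.sup'_le
      intro p hp
      have h1 : f p - φ (dist y p) ≤ h y := by
        simp only [hhdef]
        exact Finset.le_sup' (fun p => f p - φ (dist y p)) hp
      have h2 : φ (dist y p) ≤ φ (dist x p) + φ (dist x y) := by
        calc φ (dist y p) ≤ φ (dist x p + dist x y) := by
              apply hφmono _ _ dist_nonneg
              rw [add_comm]
              calc dist y p ≤ dist y x + dist x p := dist_triangle _ _ _
                _ = dist x y + dist x p := by rw [dist_comm]
          _ ≤ φ (dist x p) + φ (dist x y) := hφsub _ _ dist_nonneg dist_nonneg
      linarith
    linarith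
  have habs : ∀ x y : X, |h x - h y| ≤ φ (dist x y) := by
    intro x y
    rw [abs_sub_le_iff]
    exact ⟨hmod x y, by rw [dist_comm]; exact hmod y x⟩
  refine ⟨h, ?_, ?_, ?_⟩
  · -- little Hölder
    intro ε' hε'
    refine ⟨(ε' / C) ^ (β - α)⁻¹, Real.rpow_pos_of_pos (div_pos hε' hC0) _, ?_⟩
    intro x y hd0 hdδ
    have hδ : dist x y ^ (β - α) ≤ ε' / C := by
      calc dist x y ^ (β - α) ≤ ((ε' / C) ^ (β - α)⁻¹) ^ (β - α) :=
            Real.rpow_le_rpow dist_nonneg hdδ.le hβα.le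
        _ = ε' / C := by
            rw [← Real.rpow_mul (div_pos hε' hC0).le, inv_mul_cancel₀ hβα.ne',
              Real.rpow_one]
    calc |h x - h y| ≤ φ (dist x y) := habs x y
      _ ≤ C * dist x y ^ β := min_le_left _ _
      _ = C * (dist x y ^ (β - α) * dist x y ^ α) := by
          rw [← Real.rpow_add hd0, sub_add_cancel]
      _ ≤ C * (ε' / C * dist x y ^ α) := by
          apply mul_le_mul_of_nonneg_left _ hC0.le
          exact mul_le_mul_of_nonneg_right hδ (Real.rpow_nonneg dist_nonneg α)
      _ = ε' * dist x y ^ α := by field_simp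
  · intro x y
    exact le_trans (habs x y) (min_le_right _ _)
  · intro p hp
    have hp' : p ∈ hFfin.toFinset := hFfin.mem_toFinset.mpr hp
    apply le_antisymm
    · apply Finset.sup'_le
      intro q hq
      have hq' : q ∈ F := hFfin.mem_toFinset.mp hq
      have h1 : f q - f p ≤ dist p q ^ α := by
        have := hf q p
        rw [dist_comm q p] at this
        exact le_trans (le_abs_self _) this
      have h2 : f q - f p ≤ φ (dist p q) := by
        refine le_min ?_ ?_
        · exact le_trans h1 (hCbound p hp q hq')
        · have := Real.rpow_nonneg (dist_nonneg : (0:ℝ) ≤ dist p q) α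
          nlinarith
      linarith
    · have h1 : f p - φ (dist p p) ≤ h p := by
        simp only [hhdef]
        exact Finset.le_sup' (fun q => f q - φ (dist p q)) hp'
      simp only [dist_self, hφ0] at h1
      linarith
end
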